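/- For α, β ∈ ℂ^× set λ₁ = α, λ₂ = (1 − β)/α, λ₃ = (2 − λ₁ − λ₂)/β, σ₁(α,β) = λ₁ + λ₂ + λ₃, and σ₂(α,β) = λ₁λ₂ + λ₁λ₃ + λ₂λ₃. Then the map u : (ℂ^×)² → ℂ², u(α,β) = (σ₁(α,β), σ₂(α,β)), has Zariski-dense image: for every nonzero polynomial F ∈ ℂ[x,y] there exist α, β ∈ ℂ^× with F(σ₁(α,β), σ₂(α,β)) ≠ 0. -/
import Mathlib

open Polynomial in
lemma aux_sq_eq_neg_one {c : ℂ} (h : c^2 = -1) : c = Complex.I ∨ c = -Complex.I := by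
  have hI : Complex.I^2 = -1 := Complex.I_sq
  have h2 : (c - Complex.I) * (c + Complex.I) = 0 := by linear_combination h - hI
  rcases mul_eq_zero.mp h2 with h' | h'
  · exact Or.inl (sub_eq_zero.mp h')
  · exact Or.inr (eq_neg_of_add_eq_zero_left h')

lemma aux_quadratic_root (e1 e2 : ℂ) : ∃ t : ℂ, t^2 - e1*t + e2 = 0 := by
  obtain ⟨d, hd⟩ := IsAlgClosed.exists_pow_nat_eq (e1^2 - 4*e2) zero_lt_two
  exact ⟨(e1 + d)/2, by linear_combination hd/4⟩

open Polynomial in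
lemma aux_cubic_root (x y : ℂ) : ∃ r : ℂ, r^3 - x*r^2 + y*r + 2 - x = 0 := by
  have hdeg : (X^3 - C x * X^2 + C y * X + C (2 - x) : ℂ[X]).degree = 3 := by
    compute_degree!
  obtain ⟨r, hr⟩ := Complex.exists_root (f := X^3 - C x * X^2 + C y * X + C (2 - x))
    (by rw [hdeg]; norm_num)
  refine ⟨r, ?_⟩
  have := hr
  simp only [IsRoot, eval_add, eval_sub, eval_mul, eval_pow, eval_X, eval_C] at this
  linear_combination this

lemma aux_eval_aeval (F : MvPolynomial (Fin 2) ℂ) (a b s : ℂ) :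
    Polynomial.eval s (MvPolynomial.aeval
      ![Polynomial.C a * Polynomial.X + Polynomial.C b, (Polynomial.X : Polynomial ℂ)] F)
    = MvPolynomial.eval ![a*s+b, s] F := by
  induction F using MvPolynomial.induction_on with
  | C r => simp
  | add p q hp hq => simp [hp, hq]
  | mul_X p n hp =>
      simp only [map_mul, MvPolynomial.aeval_X, MvPolynomial.eval_X, Polynomial.eval_mul, hp]
      congr 1
      fin_cases n <;> simp

lemma aux_X_sub_C_ne (a : ℂ) :
    (MvPolynomial.X 1 - MvPolynomial.C a : MvPolynomial (Fin 2) ℂ) ≠ 0 := by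
  intro h
  have := congrArg (MvPolynomial.eval (fun _ => a + 1)) h
  simp at this

/-- For `α, β ∈ ℂ^×`, set `λ₁ = α`, `λ₂ = (1 − β)/α`,
`λ₃ = (2 − λ₁ − λ₂)/β`, `σ₁ = λ₁ + λ₂ + λ₃` and `σ₂ = λ₁λ₂ + λ₁λ₃ + λ₂λ₃`.
The map `u(α, β) = (σ₁, σ₂)` has Zariski-dense image: for every nonzero
`F ∈ ℂ[x,y]` there are `α, β ∈ ℂ^×` with `F(σ₁, σ₂) ≠ 0`. -/
theorem multiplier_map_dominant
    (F : MvPolynomial (Fin 2) ℂ) (hF : F ≠ 0) :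
    ∃ α β : ℂ, α ≠ 0 ∧ β ≠ 0 ∧
      MvPolynomial.eval
        ![α + (1 - β) / α + (2 - α - (1 - β) / α) / β,
          α * ((1 - β) / α) + α * ((2 - α - (1 - β) / α) / β)
            + ((1 - β) / α) * ((2 - α - (1 - β) / α) / β)] F ≠ 0 := by
  by_contra hcon
  push_neg at hcon
  -- hcon : ∀ α β, α ≠ 0 → β ≠ 0 → eval ![…] F = 0
  have key : ∀ c : ℂ, c ≠ Complex.I → c ≠ -Complex.I → ∀ s2 : ℂ,
      s2 ≠ 2*c - c^2 → s2 ≠ 2*c + 1 →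
      MvPolynomial.eval ![(c*s2 + c^3 + 2)/(1 + c^2), s2] F = 0 := by
    intro c hci hci' s2 hs2a hs2b
    have hK : (1 + c^2) ≠ 0 := by
      intro h0
      rcases aux_sq_eq_neg_one (c := c) (by linear_combination h0) with h | h
      exacts [hci h, hci' h]
    set s1 := (c*s2 + c^3 + 2)/(1 + c^2) with hs1
    set e2 := (s2 + c^2 - 2*c)/(1 + c^2) with he2
    set e1 := s1 - c with he1def
    have h1 : s1 * (1 + c^2) = c*s2 + c^3 + 2 := by
      rw [hs1]; field_simp
    have h2 : e2 * (1 + c^2) = s2 + c^2 - 2*c := by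
      rw [he2]; field_simp
    have he2ne0 : e2 ≠ 0 := by
      intro h0; apply hs2a
      rw [h0] at h2; linear_combination -h2
    have he2ne1 : e2 ≠ 1 := by
      intro h0; apply hs2b
      rw [h0] at h2; linear_combination -h2
    have fA : s1 = 2 + c*e2 := by
      have hf : (s1 - c*e2 - 2) * (1 + c^2) = 0 := by linear_combination h1 - c*h2
      rcases mul_eq_zero.mp hf with h | h
      · linear_combination h
      · exact absurd h hK
    have fB : s2 = e2 + (s1 - c)*c := by
      have hf : (s2 - e2 - (s1 - c)*c) * (1 + c^2) = 0 := by linear_combination -h2 - c*h1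
      rcases mul_eq_zero.mp hf with h | h
      · linear_combination h
      · exact absurd h hK
    obtain ⟨l, hroot⟩ := aux_quadratic_root e1 e2
    have hl : l ≠ 0 := by
      intro h0; rw [h0] at hroot; apply he2ne0; linear_combination hroot
    have hb : (1 : ℂ) - e2 ≠ 0 := by
      intro h0; apply he2ne1; linear_combination -h0
    have hres := hcon l (1 - e2) hl hb
    have hsum : l + (1 - (1 - e2))/l = e1 := by
      field_simp
      linear_combination hroot
    have h2e : 2 - e1 = c*(1 - e2) := by linear_combination -he1def - fA
    have hTnum : 2 - l - (1 - (1 - e2))/l = c*(1 - e2) := by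
      linear_combination h2e - hsum
    have hT : (2 - l - (1 - (1 - e2))/l)/(1 - e2) = c := by
      rw [hTnum]; field_simp
    have hv : (![l + (1 - (1 - e2))/l + (2 - l - (1 - (1 - e2))/l)/(1 - e2),
        l * ((1 - (1 - e2))/l) + l * ((2 - l - (1 - (1 - e2))/l)/(1 - e2))
          + ((1 - (1 - e2))/l) * ((2 - l - (1 - (1 - e2))/l)/(1 - e2))] : Fin 2 → ℂ)
        = ![s1, s2] := by
      funext i; fin_cases i
      · show l + (1 - (1 - e2))/l + (2 - l - (1 - (1 - e2))/l)/(1 - e2) = s1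
        rw [hT]
        linear_combination hsum + he1def
      · show l * ((1 - (1 - e2))/l) + l * ((2 - l - (1 - (1 - e2))/l)/(1 - e2))
          + ((1 - (1 - e2))/l) * ((2 - l - (1 - (1 - e2))/l)/(1 - e2)) = s2
        rw [hT]
        have he2l : (1 - (1 - e2))/l = e1 - l := by linear_combination hsum
        rw [he2l]
        linear_combination -hroot - fB + c*he1def
    rw [hv] at hres
    exact hres
  -- Step 2: the restriction of F to each line L_c vanishes identically
  have hfc : ∀ c : ℂ, c ≠ Complex.I → c ≠ -Complex.I →
      (MvPolynomial.aeval ![Polynomial.C (c/(1+c^2)) * Polynomial.X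
        + Polynomial.C ((c^3+2)/(1+c^2)), (Polynomial.X : Polynomial ℂ)] F) = 0 := by
    intro c hci hci'
    have hK : (1 + c^2) ≠ 0 := by
      intro h0
      rcases aux_sq_eq_neg_one (c := c) (by linear_combination h0) with h | h
      exacts [hci h, hci' h]
    have hg : (MvPolynomial.aeval ![Polynomial.C (c/(1+c^2)) * Polynomial.X
        + Polynomial.C ((c^3+2)/(1+c^2)), (Polynomial.X : Polynomial ℂ)] F)
        * ((Polynomial.X - Polynomial.C (2*c - c^2)) * (Polynomial.X - Polynomial.C (2*c+1)))
        = 0 := by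
      apply Polynomial.funext
      intro s
      simp only [Polynomial.eval_mul, Polynomial.eval_sub, Polynomial.eval_X,
        Polynomial.eval_C, Polynomial.eval_zero]
      by_cases ha : s = 2*c - c^2
      · rw [ha]; ring
      by_cases hb2 : s = 2*c + 1
      · rw [hb2]; ring
      · have hz := key c hci hci' s ha hb2
        rw [aux_eval_aeval]
        have hx : (c/(1+c^2))*s + (c^3+2)/(1+c^2) = (c*s + c^3 + 2)/(1+c^2) := by
          field_simp
          ring
        rw [hx, hz]; ring
    rcases mul_eq_zero.mp hg with h | h
    · exact h
    · exfalso
      rcases mul_eq_zero.mp h with h' | h' <;> exact Polynomial.X_sub_C_ne_zero _ h'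
  -- Step 3: coverage
  have hcov : ∀ x y : ℂ, y ≠ 1 + 2*Complex.I → y ≠ 1 - 2*Complex.I →
      MvPolynomial.eval ![x, y] F = 0 := by
    intro x y hy1 hy2
    obtain ⟨r, hr⟩ := aux_cubic_root x y
    have hI : Complex.I^2 = -1 := Complex.I_sq
    have hrI : r ≠ Complex.I := by
      intro h0; rw [h0] at hr; apply hy1
      linear_combination (-Complex.I)*hr + (Complex.I^2 - 1 + y - x*Complex.I)*hI
    have hrI' : r ≠ -Complex.I := by
      intro h0; rw [h0] at hr; apply hy2
      linear_combination Complex.I*hr + (Complex.I^2 - 1 + y + x*Complex.I)*hI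
    have hK : (1 + r^2) ≠ 0 := by
      intro h0
      rcases aux_sq_eq_neg_one (c := r) (by linear_combination h0) with h | h
      exacts [hrI h, hrI' h]
    have h0 := hfc r hrI hrI'
    have he := aux_eval_aeval F (r/(1+r^2)) ((r^3+2)/(1+r^2)) y
    rw [h0] at he
    simp only [Polynomial.eval_zero] at he
    have hx : (r/(1+r^2))*y + (r^3+2)/(1+r^2) = x := by
      field_simp
      linear_combination hr
    rw [hx] at he
    exact he.symm
  -- Step 4: conclude F = 0
  apply hF
  have hF' : F * (MvPolynomial.X 1 - MvPolynomial.C (1 + 2*Complex.I))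
      * (MvPolynomial.X 1 - MvPolynomial.C (1 - 2*Complex.I)) = 0 := by
    apply MvPolynomial.funext
    intro v
    simp only [map_mul, map_sub, map_zero, MvPolynomial.eval_X, MvPolynomial.eval_C]
    by_cases h1 : v 1 = 1 + 2*Complex.I
    · rw [h1]; ring
    by_cases h2 : v 1 = 1 - 2*Complex.I
    · rw [h2]; ring
    · have hz := hcov (v 0) (v 1) h1 h2
      have hvv : (![v 0, v 1] : Fin 2 → ℂ) = v := by
        funext i; fin_cases i <;> rfl
      rw [hvv] at hz
      rw [hz]; ring
  rcases mul_eq_zero.mp hF' with h | h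
  · rcases mul_eq_zero.mp h with h' | h'
    · exact h'
    · exact absurd h' (aux_X_sub_C_ne _)
  · exact absurd h (aux_X_sub_C_ne _)
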